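/- Let k be a commutative ring, A a k-algebra, N an (A,A)-bimodule, and Σ = (−) ⊗_A N the induced endofunctor on (A,A)-bimodules. Then Σ admits a connection σ : B̃Σ ⟶ ΣB̃ (equivalently a natural splitting ∇_M : M ⊗_A N ⟶ M ⊗_k N of the quotient maps M ⊗_k N ⟶ M ⊗_A N) if and only if N is k-relative projective as a left A-module, i.e., the action map A ⊗_k N ⟶ N admits a left A-linear splitting. -/

import Mathlib

/-!
If `s : N → A ⊗_k N` splits the action map, then `m ⊗ n ↦ Σ mᵢaᵢ ⊗ nᵢ` with `s n = Σ aᵢ ⊗ nᵢ`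
kills the relations `ma ⊗ n - m ⊗ an` and so descends to a natural splitting
`∇_M : M ⊗_A N → M ⊗_k N`. Conversely, the action map factors through `A ⊗_A N`, so
`n ↦ ∇_A (1 ⊗ n)` splits it.
-/

open TensorProduct

universe u

namespace BohmStefan

variable (k : Type u) [CommRing k] (A : Type u) [Ring A] [Algebra k A]

/-- The `A`-submodule of `M ⊗[k] N` generated by the elements `ma ⊗ n - m ⊗ an`;
the quotient by it is `M ⊗_A N`. -/
def relSub (M : Type u) [AddCommGroup M] [Module k M] [Module A M] [Module Aᵐᵒᵖ M]
    [IsScalarTower k A M]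
    (N : Type u) [AddCommGroup N] [Module k N] [Module A N] :
    Submodule A (M ⊗[k] N) :=
  Submodule.span A {x : M ⊗[k] N | ∃ (a : A) (m : M) (n : N),
    x = (MulOpposite.op a • m) ⊗ₜ[k] n - m ⊗ₜ[k] (a • n)}

/-- The action map `A ⊗[k] N ⟶ N`, `a ⊗ n ↦ a • n`. -/
noncomputable def actionMap (N : Type u) [AddCommGroup N] [Module k N] [Module A N]
    [IsScalarTower k A N] : A ⊗[k] N →ₗ[k] N :=
  TensorProduct.lift (LinearMap.mk₂ k (fun a n => a • n)
    (fun a a' n => add_smul _ _ _) (fun s a n => smul_assoc _ _ _)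
    (fun a n n' => smul_add _ _ _) (fun s a n => smul_comm _ _ _))

variable {k A}

section Relations

variable {M : Type u} [AddCommGroup M] [Module k M] [Module A M] [Module Aᵐᵒᵖ M]
  [IsScalarTower k A M] {N : Type u} [AddCommGroup N] [Module k N] [Module A N]

lemma mkQ_op_smul_tmul (a : A) (m : M) (n : N) :
    (relSub k A M N).mkQ ((MulOpposite.op a • m) ⊗ₜ[k] n) =
      (relSub k A M N).mkQ (m ⊗ₜ[k] (a • n)) :=
  (Submodule.Quotient.eq _).2 (Submodule.subset_span ⟨a, m, n, rfl⟩)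

end Relations

section Action

variable {N : Type u} [AddCommGroup N] [Module k N] [Module A N] [IsScalarTower k A N]

@[simp] lemma actionMap_tmul (a : A) (n : N) : actionMap k A N (a ⊗ₜ[k] n) = a • n := rfl

lemma actionMap_smul (a : A) (t : A ⊗[k] N) :
    actionMap k A N (a • t) = a • actionMap k A N t := by
  induction t using TensorProduct.induction_on with
  | zero => simp
  | tmul b n => simp [smul_tmul', mul_smul]
  | add x y hx hy => simp [smul_add, hx, hy]

variable (k A N) in
noncomputable def actionMapₗ : A ⊗[k] N →ₗ[A] N :=
  { actionMap k A N with map_smul' := actionMap_smul }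

lemma relSub_le_ker_actionMapₗ : relSub k A A N ≤ LinearMap.ker (actionMapₗ k A N) := by
  rw [relSub, Submodule.span_le]
  rintro _ ⟨a, m, n, rfl⟩
  simp [actionMapₗ, mul_smul]

variable (k A N) in
noncomputable def oneTmul : N →ₗ[A] (A ⊗[k] N) ⧸ relSub k A A N where
  toFun n := (relSub k A A N).mkQ (1 ⊗ₜ n)
  map_add' n n' := by rw [tmul_add, map_add]
  map_smul' a n := by
    rw [RingHom.id_apply, ← map_smul, smul_tmul', smul_eq_mul, mul_one, ← mkQ_op_smul_tmul,
      op_smul_eq_mul, one_mul]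

lemma exists_section_of_splitting (nabla : (A ⊗[k] N) ⧸ relSub k A A N →ₗ[A] A ⊗[k] N)
    (hnabla : ∀ x, (relSub k A A N).mkQ (nabla x) = x) :
    ∃ s : N →ₗ[A] A ⊗[k] N, ∀ n : N, actionMap k A N (s n) = n := by
  refine ⟨nabla ∘ₗ oneTmul k A N, fun n => ?_⟩
  let actionQ := (relSub k A A N).liftQ (actionMapₗ k A N) relSub_le_ker_actionMapₗ
  calc actionMap k A N (nabla (oneTmul k A N n))
      = actionQ ((relSub k A A N).mkQ (nabla (oneTmul k A N n))) := rfl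
    _ = actionQ (oneTmul k A N n) := by rw [hnabla]
    _ = n := one_smul A n

end Action

section RightAction

variable (M : Type u) [AddCommGroup M] [Module k M] [Module Aᵐᵒᵖ M] [IsScalarTower k Aᵐᵒᵖ M]

variable (k A) in
noncomputable def rightActionMap : M ⊗[k] A →ₗ[k] M :=
  TensorProduct.lift (LinearMap.mk₂ k (fun m a => MulOpposite.op a • m)
    (fun m m' a => smul_add _ _ _)
    (fun c m a => smul_comm _ _ _)
    (fun m a a' => by rw [MulOpposite.op_add, add_smul])
    (fun c m a => by rw [MulOpposite.op_smul, smul_assoc]))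

variable (N : Type u) [AddCommGroup N] [Module k N]

variable (k A) in
noncomputable def rightActionTensor : M ⊗[k] (A ⊗[k] N) →ₗ[k] M ⊗[k] N :=
  LinearMap.rTensor N (rightActionMap k A M) ∘ₗ (TensorProduct.assoc k M A N).symm.toLinearMap

variable {M N}

@[simp] lemma rightActionTensor_tmul_tmul (m : M) (a : A) (n : N) :
    rightActionTensor k A M N (m ⊗ₜ[k] (a ⊗ₜ[k] n)) = (MulOpposite.op a • m) ⊗ₜ[k] n := by
  simp [rightActionTensor, rightActionMap]

lemma rightActionTensor_smul_tmul [Module A M] [IsScalarTower k A M] [SMulCommClass A Aᵐᵒᵖ M]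
    (a : A) (m : M) (t : A ⊗[k] N) :
    rightActionTensor k A M N ((a • m) ⊗ₜ[k] t) = a • rightActionTensor k A M N (m ⊗ₜ[k] t) := by
  induction t using TensorProduct.induction_on with
  | zero => simp
  | tmul b n => simp [smul_tmul', smul_comm]
  | add x y hx hy => simp [tmul_add, hx, hy]

lemma rightActionTensor_tmul_smul [Module A N] [IsScalarTower k A N] (a : A) (m : M)
    (t : A ⊗[k] N) :
    rightActionTensor k A M N (m ⊗ₜ[k] (a • t)) =
      rightActionTensor k A M N ((MulOpposite.op a • m) ⊗ₜ[k] t) := by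
  induction t using TensorProduct.induction_on with
  | zero => simp
  | tmul b n => simp [smul_tmul', mul_smul]
  | add x y hx hy => simp only [smul_add, tmul_add, map_add, hx, hy]

lemma mkQ_rightActionTensor [Module A M] [IsScalarTower k A M] [Module A N] [IsScalarTower k A N]
    (m : M) (t : A ⊗[k] N) :
    (relSub k A M N).mkQ (rightActionTensor k A M N (m ⊗ₜ[k] t)) =
      (relSub k A M N).mkQ (m ⊗ₜ[k] actionMap k A N t) := by
  induction t using TensorProduct.induction_on with
  | zero => simp
  | tmul a n => rw [rightActionTensor_tmul_tmul, mkQ_op_smul_tmul, actionMap_tmul]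
  | add x y hx hy => simp only [map_add, tmul_add, hx, hy]

lemma rTensor_rightActionTensor {M' : Type u} [AddCommGroup M'] [Module k M'] [Module Aᵐᵒᵖ M']
    [IsScalarTower k Aᵐᵒᵖ M'] (f : M →ₗ[k] M')
    (hf : ∀ (a : A) (m : M), f (MulOpposite.op a • m) = MulOpposite.op a • f m)
    (m : M) (t : A ⊗[k] N) :
    LinearMap.rTensor N f (rightActionTensor k A M N (m ⊗ₜ[k] t)) =
      rightActionTensor k A M' N (f m ⊗ₜ[k] t) := by
  induction t using TensorProduct.induction_on with
  | zero => simp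
  | tmul a n => simp [hf]
  | add x y hx hy => simp only [tmul_add, map_add, hx, hy]

end RightAction

section Connection

variable {N : Type u} [AddCommGroup N] [Module k N] [Module A N] [IsScalarTower k A N]
  (s : N →ₗ[A] A ⊗[k] N)
  {M : Type u} [AddCommGroup M] [Module k M] [Module A M] [Module Aᵐᵒᵖ M]
  [IsScalarTower k A M] [IsScalarTower k Aᵐᵒᵖ M] [SMulCommClass A Aᵐᵒᵖ M]

variable (M) in
noncomputable def connectionOfSection : M ⊗[k] N →ₗ[A] M ⊗[k] N where
  toFun x := rightActionTensor k A M N (LinearMap.lTensor M (s.restrictScalars k) x)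
  map_add' x y := by simp
  map_smul' a x := by
    induction x using TensorProduct.induction_on with
    | zero => simp
    | tmul m n => simp [smul_tmul', rightActionTensor_smul_tmul]
    | add x y hx hy => simp only [smul_add, map_add, hx, hy]

lemma connectionOfSection_tmul (m : M) (n : N) :
    connectionOfSection s M (m ⊗ₜ[k] n) = rightActionTensor k A M N (m ⊗ₜ[k] s n) := rfl

lemma relSub_le_ker_connectionOfSection :
    relSub k A M N ≤ LinearMap.ker (connectionOfSection s M) := by
  rw [relSub, Submodule.span_le]
  rintro _ ⟨a, m, n, rfl⟩
  rw [SetLike.mem_coe, LinearMap.mem_ker, map_sub, connectionOfSection_tmul,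
    connectionOfSection_tmul, map_smul, rightActionTensor_tmul_smul, sub_self]

lemma mkQ_connectionOfSection (hs : ∀ n : N, actionMap k A N (s n) = n) (x : M ⊗[k] N) :
    (relSub k A M N).mkQ (connectionOfSection s M x) = (relSub k A M N).mkQ x := by
  induction x using TensorProduct.induction_on with
  | zero => simp
  | tmul m n => rw [connectionOfSection_tmul, mkQ_rightActionTensor, hs]
  | add x y hx hy => simp only [map_add, hx, hy]

lemma rTensor_connectionOfSection {M' : Type u} [AddCommGroup M'] [Module k M'] [Module A M']
    [Module Aᵐᵒᵖ M'] [IsScalarTower k A M'] [IsScalarTower k Aᵐᵒᵖ M'] [SMulCommClass A Aᵐᵒᵖ M']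
    (f : M →ₗ[k] M')
    (hf : ∀ (a : A) (m : M), f (MulOpposite.op a • m) = MulOpposite.op a • f m)
    (x : M ⊗[k] N) :
    LinearMap.rTensor N f (connectionOfSection s M x) =
      connectionOfSection s M' (LinearMap.rTensor N f x) := by
  induction x using TensorProduct.induction_on with
  | zero => simp
  | tmul m n => exact rTensor_rightActionTensor f hf m (s n)
  | add x y hx hy => simp only [map_add, hx, hy]

end Connection

theorem connection_iff_kRelativeProjective
    (N : Type u) [AddCommGroup N] [Module k N] [Module A N]
    [IsScalarTower k A N] :
    (∃ nabla : ∀ (M : Type u) [AddCommGroup M] [Module k M] [Module A M]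
        [Module Aᵐᵒᵖ M] [IsScalarTower k A M] [IsScalarTower k Aᵐᵒᵖ M]
        [SMulCommClass A Aᵐᵒᵖ M],
        ((M ⊗[k] N) ⧸ relSub k A M N) →ₗ[A] M ⊗[k] N,
      -- each `∇_M` splits the quotient map `M ⊗_k N ⟶ M ⊗_A N`:
      (∀ (M : Type u) [AddCommGroup M] [Module k M] [Module A M] [Module Aᵐᵒᵖ M]
          [IsScalarTower k A M] [IsScalarTower k Aᵐᵒᵖ M] [SMulCommClass A Aᵐᵒᵖ M],
        ∀ x : (M ⊗[k] N) ⧸ relSub k A M N, (relSub k A M N).mkQ (nabla M x) = x) ∧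
      -- naturality in bimodule maps `f : M ⟶ M'`:
      (∀ (M M' : Type u) [AddCommGroup M] [Module k M] [Module A M] [Module Aᵐᵒᵖ M]
          [IsScalarTower k A M] [IsScalarTower k Aᵐᵒᵖ M] [SMulCommClass A Aᵐᵒᵖ M]
          [AddCommGroup M'] [Module k M'] [Module A M'] [Module Aᵐᵒᵖ M']
          [IsScalarTower k A M'] [IsScalarTower k Aᵐᵒᵖ M'] [SMulCommClass A Aᵐᵒᵖ M']
          (f : M →ₗ[A] M')
          (hf : ∀ (a : A) (m : M), f (MulOpposite.op a • m) = MulOpposite.op a • f m),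
        ∀ x : M ⊗[k] N,
          nabla M' ((relSub k A M' N).mkQ
              (TensorProduct.map (f.restrictScalars k) LinearMap.id x)) =
            TensorProduct.map (f.restrictScalars k) LinearMap.id
              (nabla M ((relSub k A M N).mkQ x)))) ↔
    (∃ s : N →ₗ[A] A ⊗[k] N, ∀ n : N, actionMap k A N (s n) = n) := by
  constructor
  · rintro ⟨nabla, hsplit, -⟩
    exact exists_section_of_splitting (nabla A) (hsplit A)
  · rintro ⟨s, hs⟩
    refine ⟨fun M _ _ _ _ _ _ _ => (relSub k A M N).liftQ (connectionOfSection s M)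
      (relSub_le_ker_connectionOfSection s), ?_, ?_⟩
    · intro M _ _ _ _ _ _ _ x
      obtain ⟨y, rfl⟩ := Submodule.mkQ_surjective _ x
      exact mkQ_connectionOfSection s hs y
    · intro M M' _ _ _ _ _ _ _ _ _ _ _ _ _ _ f hf x
      exact (rTensor_connectionOfSection s (f.restrictScalars k) hf x).symm

end BohmStefan
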